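/- Let 0 ≤ β < 1/2, ε ≥ 0, and 0 ≤ γ_S ≤ 1 for all S ∈ 𝒮. Let p be a probability distribution over 𝒮 and x := Σ_{S∈𝒮} p_S χ^S. If for every narrow cut C ∈ 𝒞 it holds that Σ_{S∈𝒮} p_S b_{S,C} ≥ (β(2 − x*(C) − ε)/(1 − 2β)) · Σ_{S∈𝒮 : |S∩C| even} p_S, then Σ_{S∈𝒮} p_S c(y^S) ≤ (β + εβ) c(x*) + (1 − 2β) c(x). -/

import Mathlib

open Finset SimpleGraph

attribute [local instance 10] Classical.propDecidable

noncomputable section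

namespace STT

variable {V : Type*} [Fintype V] [DecidableEq V]

/-- `δ(U)`: the set of edges of the complete graph on `V` with exactly one endpoint in `U`. -/
def cutOf (U : Finset V) : Finset (Sym2 V) :=
  Finset.univ.filter fun e => ∃ u v : V, e = Sym2.mk u v ∧ u ∈ U ∧ v ∉ U

/-- `E[U]`: the set of edges with both endpoints in `U`. -/
def within (U : Finset V) : Finset (Sym2 V) :=
  Finset.univ.filter fun e => ¬e.IsDiag ∧ ∀ v ∈ e, v ∈ U

/-- `x(F) := ∑_{e ∈ F} x_e`. -/
def xval (x : Sym2 V → ℝ) (F : Finset (Sym2 V)) : ℝ := ∑ e ∈ F, x e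

/-- characteristic vector `χ^S` of an edge set `S`. -/
def chi (S : Finset (Sym2 V)) : Sym2 V → ℝ := fun e => if e ∈ S then 1 else 0

/-- `S` is the edge set of a spanning tree of the complete graph on `V`. -/
def IsSpanningTree (S : Finset (Sym2 V)) : Prop :=
  (∀ e ∈ S, ¬e.IsDiag) ∧
    (SimpleGraph.fromEdgeSet (↑S : Set (Sym2 V))).Connected ∧
    S.card = Fintype.card V - 1

/-- the induced subgraph `(V,S)[M]` is connected. -/
def InducedConn (S : Finset (Sym2 V)) (M : Finset V) : Prop :=
  (SimpleGraph.induce (↑M : Set V) (SimpleGraph.fromEdgeSet (↑S : Set (Sym2 V)))).Connected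

/-- `x` is a feasible solution of the `s`-`t`-path LP. -/
def LPFeasible (s t : V) (x : Sym2 V → ℝ) : Prop :=
  (∀ e : Sym2 V, ¬e.IsDiag → 0 ≤ x e) ∧
    (∀ e : Sym2 V, e.IsDiag → x e = 0) ∧
    (∀ U : Finset V, U.Nonempty → U ≠ Finset.univ → Even (U ∩ {s, t}).card →
      2 ≤ xval x (cutOf U)) ∧
    (∀ U : Finset V, U.Nonempty → U ≠ Finset.univ → ¬Even (U ∩ {s, t}).card →
      1 ≤ xval x (cutOf U)) ∧
    (∀ v : V, v ≠ s → v ≠ t → xval x (cutOf {v}) = 2) ∧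
    xval x (cutOf {s}) = 1 ∧ xval x (cutOf {t}) = 1

/-- `C` is a narrow cut w.r.t. `x`. -/
def IsNarrowCut (x : Sym2 V → ℝ) (C : Finset (Sym2 V)) : Prop :=
  ∃ U : Finset V, U.Nonempty ∧ U ≠ Finset.univ ∧ C = cutOf U ∧ xval x C < 2

/-- property (★) for `x` w.r.t. `x*` and `ε`. -/
def StarProp (s t : V) (xstar : Sym2 V → ℝ) (ε : ℝ) (x : Sym2 V → ℝ) : Prop :=
  xval x (cutOf {s}) = 1 ∧ xval x (cutOf {t}) = 1 ∧
    ∀ F : Finset (Sym2 V), xval xstar F - ε ≤ xval x F ∧ xval x F ≤ xval xstar F + ε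

/-- `θ_i := ⌈r (2 − x*(C_i) − ε)⌉` where `C_i = δ(U_i)`. -/
def theta (r : ℕ) (xstar : Sym2 V → ℝ) (ε : ℝ) (U : ℕ → Finset V) (i : ℕ) : ℤ :=
  ⌈(r : ℝ) * (2 - xval xstar (cutOf (U i)) - ε)⌉

/-- `c(x) = ∑_{e={u,v}∈E} c(u,v) x_e` (each unordered pair counted once). -/
def cost (c : V → V → ℝ) (x : Sym2 V → ℝ) : ℝ :=
  (∑ u : V, ∑ v : V, c u v * x (Sym2.mk u v)) / 2

/-- the finset of all narrow cuts. -/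
def NarrowCuts (xstar : Sym2 V → ℝ) : Finset (Finset (Sym2 V)) :=
  Finset.univ.filter fun C => IsNarrowCut xstar C

/-- degree of `v` in the edge set `S`. -/
def degIn (S : Finset (Sym2 V)) (v : V) : ℕ := (S.filter fun e => v ∈ e).card

/-- `T_S`: vertices whose degree in `S` has the wrong parity. -/
def wrongParity (s t : V) (S : Finset (Sym2 V)) : Finset V :=
  Finset.univ.filter fun v =>
    if v = s ∨ v = t then Even (degIn S v) else ¬Even (degIn S v)

/-- `P` is the edge set of the (unique) `a`-`b`-path in `S`. -/
def IsPathEdges (a b : V) (S P : Finset (Sym2 V)) : Prop :=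
  ∃ w : (SimpleGraph.fromEdgeSet (↑S : Set (Sym2 V))).Walk a b,
    w.IsPath ∧ P = w.edges.toFinset

/-- the parity-correction vector `z^S` (for the `s`-`t`-path edge set `IS ⊆ S`). -/
def zvec (xstar : Sym2 V → ℝ) (β ε γS : ℝ) (eC : Finset (Sym2 V) → Sym2 V)
    (S IS : Finset (Sym2 V)) : Sym2 V → ℝ := fun g =>
  (1 - 2 * β) * γS * chi IS g +
    ∑ C ∈ (NarrowCuts xstar).filter (fun C => Even (S ∩ C).card),
      max 0 (β * (2 - xval xstar C - ε) - (1 - 2 * β) * γS) * chi {eC C} g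

/-- the vector `y^S`. -/
def yvec (xstar : Sym2 V → ℝ) (β ε γS : ℝ) (eC : Finset (Sym2 V) → Sym2 V)
    (S IS : Finset (Sym2 V)) : Sym2 V → ℝ := fun g =>
  β * (1 + ε) * xstar g + (1 - 2 * β) * chi (S \ IS) g + zvec xstar β ε γS eC S IS g

/-- the benefit `b_{S,C}`. -/
def benefit (xstar : Sym2 V → ℝ) (β ε γS : ℝ) (S C : Finset (Sym2 V)) : ℝ :=
  if (S ∩ C).card = 1 then 1 - γS
  else if Even (S ∩ C).card then min (β * (2 - xval xstar C - ε) / (1 - 2 * β)) γS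
  else 0

set_option linter.unusedSectionVars false

-- helper lemmas to be inserted before stmt10
section Helpers

variable {V : Type*} [Fintype V] [DecidableEq V]

lemma cost_add (c : V → V → ℝ) (x y : Sym2 V → ℝ) :
    cost c (fun e => x e + y e) = cost c x + cost c y := by
  simp only [cost, mul_add, Finset.sum_add_distrib]
  ring

lemma cost_smul (c : V → V → ℝ) (a : ℝ) (x : Sym2 V → ℝ) :
    cost c (fun e => a * x e) = a * cost c x := by
  simp only [cost, mul_left_comm, ← Finset.mul_sum, mul_div_assoc]

lemma cost_sum {ι : Type*} (c : V → V → ℝ) (F : Finset ι) (x : ι → Sym2 V → ℝ) :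
    cost c (fun e => ∑ i ∈ F, x i e) = ∑ i ∈ F, cost c (x i) := by
  classical
  induction F using Finset.induction_on with
  | empty => simp [cost]
  | @insert a s ha ih =>
    have h1 : (fun e => ∑ i ∈ insert a s, x i e)
        = fun e => x a e + ∑ i ∈ s, x i e := by
      funext e; rw [Finset.sum_insert ha]
    rw [h1, cost_add, ih, Finset.sum_insert ha]

lemma cost_csum {ι : Type*} (c : V → V → ℝ) (F : Finset ι) (m : ι → ℝ) (x : ι → Sym2 V → ℝ) :
    cost c (fun e => ∑ i ∈ F, m i * x i e) = ∑ i ∈ F, m i * cost c (x i) := by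
  rw [cost_sum c F (fun i e => m i * x i e)]
  exact Finset.sum_congr rfl fun i _ => cost_smul c (m i) (x i)

lemma cost_nonneg (c : V → V → ℝ) (hc : ∀ u v, 0 ≤ c u v) (x : Sym2 V → ℝ)
    (hx : ∀ e, 0 ≤ x e) : 0 ≤ cost c x := by
  apply div_nonneg _ (by norm_num)
  refine Finset.sum_nonneg fun u _ => Finset.sum_nonneg fun v _ => mul_nonneg (hc u v) (hx _)

lemma chi_nonneg (S : Finset (Sym2 V)) (e : Sym2 V) : 0 ≤ chi S e := by
  unfold chi; split <;> norm_num

lemma chi_sdiff_add (S I : Finset (Sym2 V)) (h : I ⊆ S) (e : Sym2 V) :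
    chi S e = chi (S \ I) e + chi I e := by
  simp only [chi, Finset.mem_sdiff]
  by_cases h1 : e ∈ I
  · simp [h1, h h1]
  · simp [h1]

lemma cost_chi_eq_sum (c : V → V → ℝ) (F : Finset (Sym2 V)) :
    cost c (chi F) = ∑ f ∈ F, cost c (chi {f}) := by
  rw [← cost_sum]
  congr 1
  funext e
  simp only [chi, Finset.mem_singleton]
  rw [Finset.sum_ite_eq F e (fun _ => (1 : ℝ))]

end Helpers
section Helpers2

variable {V : Type*} [Fintype V] [DecidableEq V]

lemma mem_cutOf {U : Finset V} {e : Sym2 V} :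
    e ∈ cutOf U ↔ ∃ u v : V, e = Sym2.mk u v ∧ u ∈ U ∧ v ∉ U := by
  simp [cutOf]

lemma cutOf_compl (U : Finset V) : cutOf Uᶜ = cutOf U := by
  ext e
  simp only [mem_cutOf, Finset.mem_compl, not_not]
  constructor
  · rintro ⟨u, v, rfl, hu, hv⟩
    exact ⟨v, u, Sym2.eq_swap, hv, hu⟩
  · rintro ⟨u, v, rfl, hu, hv⟩
    exact ⟨v, u, Sym2.eq_swap, hv, hu⟩

lemma walk_crosses {G : SimpleGraph V} {U : Finset V} :
    ∀ {u v : V} (w : G.Walk u v), u ∈ U → v ∉ U → ∃ e ∈ w.edges, e ∈ cutOf U := by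
  intro u v w
  induction w with
  | nil => intro hu hv; exact absurd hu hv
  | @cons a b d h w ih =>
    intro ha hd
    by_cases hb : b ∈ U
    · obtain ⟨e, he, hcut⟩ := ih hb hd
      exact ⟨e, by simp [he], hcut⟩
    · exact ⟨Sym2.mk a b, by simp, mem_cutOf.mpr ⟨a, b, rfl, ha, hb⟩⟩

lemma stay {S : Finset (Sym2 V)} {f : Sym2 V} {W : Finset V}
    (hW : S ∩ cutOf W = {f}) :
    ∀ {u v : V}, (SimpleGraph.fromEdgeSet (↑(S.erase f) : Set (Sym2 V))).Walk u v →
      u ∈ W → v ∈ W := by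
  intro u v w
  induction w with
  | nil => exact id
  | @cons a b d h w ih =>
    intro ha
    apply ih
    by_contra hb
    rw [SimpleGraph.fromEdgeSet_adj] at h
    have h1 : Sym2.mk a b ∈ S.erase f := Finset.mem_coe.mp h.1
    have hmem : Sym2.mk a b ∈ S ∩ cutOf W :=
      Finset.mem_inter.mpr ⟨Finset.mem_of_mem_erase h1, mem_cutOf.mpr ⟨a, b, rfl, ha, hb⟩⟩
    rw [hW, Finset.mem_singleton] at hmem
    exact (Finset.ne_of_mem_erase h1) hmem

lemma reach_step {S : Finset (Sym2 V)} {f : Sym2 V} {a b : V} (hf : f = Sym2.mk a b) :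
    ∀ {u v : V}, (SimpleGraph.fromEdgeSet (↑S : Set (Sym2 V))).Walk u v →
      ((SimpleGraph.fromEdgeSet (↑(S.erase f) : Set (Sym2 V))).Reachable a u ∨
        (SimpleGraph.fromEdgeSet (↑(S.erase f) : Set (Sym2 V))).Reachable b u) →
      ((SimpleGraph.fromEdgeSet (↑(S.erase f) : Set (Sym2 V))).Reachable a v ∨
        (SimpleGraph.fromEdgeSet (↑(S.erase f) : Set (Sym2 V))).Reachable b v) := by
  intro u v w
  induction w with
  | nil => exact id
  | @cons x y d h w ih =>
    intro hx
    apply ih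
    by_cases heq : Sym2.mk x y = f
    · rw [hf] at heq
      rcases Sym2.eq_iff.mp heq with ⟨rfl, rfl⟩ | ⟨rfl, rfl⟩
      · exact Or.inr (SimpleGraph.Reachable.refl _)
      · exact Or.inl (SimpleGraph.Reachable.refl _)
    · rw [SimpleGraph.fromEdgeSet_adj] at h
      have hadj : (SimpleGraph.fromEdgeSet (↑(S.erase f) : Set (Sym2 V))).Adj x y := by
        rw [SimpleGraph.fromEdgeSet_adj]
        exact ⟨Finset.mem_coe.mpr (Finset.mem_erase.mpr ⟨heq, Finset.mem_coe.mp h.1⟩), h.2⟩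
      exact hx.imp (fun r => r.trans hadj.reachable) (fun r => r.trans hadj.reachable)

lemma comp_id {S : Finset (Sym2 V)} {f : Sym2 V} {a b : V} (hf : f = Sym2.mk a b)
    (hconn : (SimpleGraph.fromEdgeSet (↑S : Set (Sym2 V))).Connected) {W : Finset V}
    (hW : S ∩ cutOf W = {f}) (ha : a ∈ W) (hb : b ∉ W) :
    W = Finset.univ.filter
      (fun v => (SimpleGraph.fromEdgeSet (↑(S.erase f) : Set (Sym2 V))).Reachable a v) := by
  ext v
  simp only [Finset.mem_filter, Finset.mem_univ, true_and]
  constructor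
  · intro hv
    obtain ⟨w0⟩ := hconn.preconnected a v
    rcases reach_step hf w0 (Or.inl (SimpleGraph.Reachable.refl a)) with h | h
    · exact h
    · exfalso
      have hW' : S ∩ cutOf Wᶜ = {f} := by rw [cutOf_compl]; exact hW
      obtain ⟨w⟩ := h
      have hvW : v ∈ Wᶜ := stay hW' w (Finset.mem_compl.mpr hb)
      exact (Finset.mem_compl.mp hvW) hv
  · intro h
    obtain ⟨w⟩ := h
    exact stay hW w ha

lemma cut_unique {S : Finset (Sym2 V)}
    (hconn : (SimpleGraph.fromEdgeSet (↑S : Set (Sym2 V))).Connected)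
    {U U' : Finset V} {f : Sym2 V}
    (hU : S ∩ cutOf U = {f}) (hU' : S ∩ cutOf U' = {f}) :
    cutOf U = cutOf U' := by
  have hfU : f ∈ cutOf U := by
    have h : f ∈ S ∩ cutOf U := by rw [hU]; exact Finset.mem_singleton_self f
    exact (Finset.mem_inter.mp h).2
  have hfU' : f ∈ cutOf U' := by
    have h : f ∈ S ∩ cutOf U' := by rw [hU']; exact Finset.mem_singleton_self f
    exact (Finset.mem_inter.mp h).2
  obtain ⟨A, B, hfab, hA, hB⟩ := mem_cutOf.mp hfU
  obtain ⟨A', B', hfab', hA', hB'⟩ := mem_cutOf.mp hfU'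
  have hUeq := comp_id hfab hconn hU hA hB
  have hABeq : Sym2.mk A' B' = Sym2.mk A B := by rw [← hfab, ← hfab']
  rcases Sym2.eq_iff.mp hABeq with ⟨h1, h2⟩ | ⟨h1, h2⟩
  · rw [h1] at hA'
    rw [h2] at hB'
    have hUeq' := comp_id hfab hconn hU' hA' hB'
    rw [hUeq, hUeq']
  · rw [h1] at hA'
    rw [h2] at hB'
    have hsw : f = Sym2.mk B A := by rw [hfab]; exact Sym2.eq_swap
    have hU'eq := comp_id hsw hconn hU' hA' hB'
    have hUc : S ∩ cutOf Uᶜ = {f} := by rw [cutOf_compl]; exact hU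
    have hUceq := comp_id hsw hconn hUc (Finset.mem_compl.mpr hB)
      (fun hc => (Finset.mem_compl.mp hc) hA)
    have hUU : U' = Uᶜ := hU'eq.trans hUceq.symm
    rw [hUU, cutOf_compl]

lemma narrow_sep {s t : V} (hst : s ≠ t) {xstar : Sym2 V → ℝ} (hfeas : LPFeasible s t xstar)
    {C : Finset (Sym2 V)} (hC : IsNarrowCut xstar C) :
    ∃ U : Finset V, C = cutOf U ∧ s ∈ U ∧ t ∉ U := by
  obtain ⟨U, hne, hnuniv, rfl, hx2⟩ := hC
  have hodd : ¬Even (U ∩ ({s, t} : Finset V)).card := fun hev =>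
    absurd (hfeas.2.2.1 U hne hnuniv hev) (by linarith)
  have hmod := Nat.not_even_iff.mp hodd
  have hle : (U ∩ ({s, t} : Finset V)).card ≤ 2 := by
    have h1 := Finset.card_le_card (Finset.inter_subset_right : U ∩ ({s, t} : Finset V) ⊆ {s, t})
    have h2 : ({s, t} : Finset V).card = 2 := Finset.card_pair hst
    omega
  have h1 : (U ∩ ({s, t} : Finset V)).card = 1 := by omega
  obtain ⟨a, hae⟩ := Finset.card_eq_one.mp h1
  have haU : a ∈ U ∩ ({s, t} : Finset V) := hae ▸ Finset.mem_singleton_self a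
  have haU1 := (Finset.mem_inter.mp haU).1
  have haU2 := (Finset.mem_inter.mp haU).2
  rcases Finset.mem_insert.mp haU2 with has | hat
  · subst has
    refine ⟨U, rfl, haU1, fun htU => hst ?_⟩
    have h2 : t ∈ U ∩ ({a, t} : Finset V) := Finset.mem_inter.mpr ⟨htU, by simp⟩
    rw [hae] at h2
    exact (Finset.mem_singleton.mp h2).symm
  · have hat' : a = t := Finset.mem_singleton.mp hat
    subst hat'
    have hsU : s ∉ U := fun hsU => hst (by
      have h2 : s ∈ U ∩ ({s, a} : Finset V) := Finset.mem_inter.mpr ⟨hsU, by simp⟩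
      rw [hae] at h2
      exact Finset.mem_singleton.mp h2)
    exact ⟨Uᶜ, (cutOf_compl U).symm, Finset.mem_compl.mpr hsU,
      fun htc => (Finset.mem_compl.mp htc) haU1⟩

lemma pathEdges_subset {s t : V} {S P : Finset (Sym2 V)} (h : IsPathEdges s t S P) : P ⊆ S := by
  obtain ⟨w, _, rfl⟩ := h
  intro e he
  rw [List.mem_toFinset] at he
  have h2 := w.edges_subset_edgeSet he
  rw [SimpleGraph.edgeSet_fromEdgeSet] at h2
  exact Finset.mem_coe.mp h2.1

set_option maxHeartbeats 1000000 in
lemma key_sum {s t : V} (hst : s ≠ t) (c : V → V → ℝ) (hcnonneg : ∀ u v, 0 ≤ c u v)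
    {xstar : Sym2 V → ℝ} (hfeas : LPFeasible s t xstar)
    {S P : Finset (Sym2 V)} (hS : IsSpanningTree S) (hP : IsPathEdges s t S P)
    (eC : Finset (Sym2 V) → Sym2 V)
    (heC : ∀ C : Finset (Sym2 V), IsNarrowCut xstar C →
      eC C ∈ C ∧ ∀ f ∈ C, cost c (chi {eC C}) ≤ cost c (chi {f})) :
    ∑ C ∈ (NarrowCuts xstar).filter (fun C => (S ∩ C).card = 1), cost c (chi {eC C})
      ≤ cost c (chi P) := by
  classical
  set T := (NarrowCuts xstar).filter (fun C => (S ∩ C).card = 1) with hT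
  have hTN : ∀ C ∈ T, IsNarrowCut xstar C := fun C hC =>
    (Finset.mem_filter.mp (Finset.mem_filter.mp hC).1).2
  set F : Finset (Sym2 V) → Sym2 V :=
    fun C => if h : (P ∩ C).Nonempty then h.choose else Sym2.mk s s with hF
  have hFP : ∀ C ∈ T, F C ∈ P ∧ F C ∈ C ∧ S ∩ C = {F C} := by
    intro C hC
    have hnarrow := hTN C hC
    have hcard : (S ∩ C).card = 1 := (Finset.mem_filter.mp hC).2
    obtain ⟨U, hCU, hsU, htU⟩ := narrow_sep hst hfeas hnarrow
    have hP2 := hP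
    obtain ⟨w, hwp, hPe⟩ := hP2
    obtain ⟨e, hew, hecut⟩ := walk_crosses w hsU htU
    have heP : e ∈ P := by rw [hPe]; exact List.mem_toFinset.mpr hew
    have heC' : e ∈ C := by rw [hCU]; exact hecut
    have hne : (P ∩ C).Nonempty := ⟨e, Finset.mem_inter.mpr ⟨heP, heC'⟩⟩
    have hfc : F C = hne.choose := by rw [hF]; exact dif_pos hne
    have hmemPC : F C ∈ P ∩ C := hfc ▸ hne.choose_spec
    have hFmemP := (Finset.mem_inter.mp hmemPC).1
    have hFmemC := (Finset.mem_inter.mp hmemPC).2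
    obtain ⟨g, hg⟩ := Finset.card_eq_one.mp hcard
    have hFSC : F C ∈ S ∩ C :=
      Finset.mem_inter.mpr ⟨pathEdges_subset hP hFmemP, hFmemC⟩
    rw [hg, Finset.mem_singleton] at hFSC
    exact ⟨hFmemP, hFmemC, by rw [hg, hFSC]⟩
  have hinj : ∀ C ∈ T, ∀ C' ∈ T, F C = F C' → C = C' := by
    intro C hC C' hC' heq
    obtain ⟨U, _, _, hCU, _⟩ := hTN C hC
    obtain ⟨U', _, _, hCU', _⟩ := hTN C' hC'
    have h1 : S ∩ cutOf U = {F C} := by rw [← hCU]; exact (hFP C hC).2.2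
    have h2 : S ∩ cutOf U' = {F C} := by rw [← hCU', heq]; exact (hFP C' hC').2.2
    rw [hCU, hCU']
    exact cut_unique hS.2.1 h1 h2
  calc ∑ C ∈ T, cost c (chi {eC C})
      ≤ ∑ C ∈ T, cost c (chi {F C}) :=
        Finset.sum_le_sum fun C hC => (heC C (hTN C hC)).2 (F C) (hFP C hC).2.1
    _ = ∑ g ∈ T.image F, cost c (chi {g}) := (Finset.sum_image (f := fun g => cost c (chi {g})) hinj).symm
    _ ≤ ∑ g ∈ P, cost c (chi {g}) := by
        apply Finset.sum_le_sum_of_subset_of_nonneg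
        · intro g hg
          obtain ⟨C, hC, rfl⟩ := Finset.mem_image.mp hg
          exact (hFP C hC).1
        · intro g _ _
          exact cost_nonneg c hcnonneg _ (chi_nonneg _)
    _ = cost c (chi P) := (cost_chi_eq_sum c P).symm

end Helpers2
section Helpers3

variable {V : Type*} [Fintype V] [DecidableEq V]

lemma max_min_identity (A g r : ℝ) (hr : 0 < r) :
    max 0 (A - r * g) = A - r * min (A / r) g := by
  have hra : r * (A / r) = A := by field_simp
  rcases le_total (A / r) g with h | h
  · have h2 : A ≤ r * g := by
      calc A = r * (A / r) := hra.symm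
        _ ≤ r * g := mul_le_mul_of_nonneg_left h hr.le
    rw [min_eq_left h, hra, max_eq_left (by linarith)]
    linarith
  · have h2 : r * g ≤ A := by
      calc r * g ≤ r * (A / r) := mul_le_mul_of_nonneg_left h hr.le
        _ = A := hra
    rw [min_eq_right h, max_eq_right (by linarith)]

lemma cost_decomp {ι : Type*} (c : V → V → ℝ) (a b d : ℝ) (x1 x2 x3 : Sym2 V → ℝ)
    (T : Finset ι) (m : ι → ℝ) (x4 : ι → Sym2 V → ℝ) :
    cost c (fun g => a * x1 g + b * x2 g + (d * x3 g + ∑ i ∈ T, m i * x4 i g))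
      = a * cost c x1 + b * cost c x2 + (d * cost c x3 + ∑ i ∈ T, m i * cost c (x4 i)) := by
  rw [cost_add c (fun g => a * x1 g + b * x2 g) (fun g => d * x3 g + ∑ i ∈ T, m i * x4 i g),
    cost_add c (fun g => a * x1 g) (fun g => b * x2 g),
    cost_add c (fun g => d * x3 g) (fun g => ∑ i ∈ T, m i * x4 i g),
    cost_smul c a x1, cost_smul c b x2, cost_smul c d x3, cost_csum c T m x4]

end Helpers3

set_option maxHeartbeats 2000000 in
theorem stmt10 {V : Type*} [Fintype V] [DecidableEq V]
    (hV : 2 ≤ Fintype.card V) (s t : V) (hst : s ≠ t)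
    (c : V → V → ℝ) (hcsymm : ∀ u v : V, c u v = c v u)
    (hcnonneg : ∀ u v : V, 0 ≤ c u v) (hcdiag : ∀ v : V, c v v = 0)
    (hctri : ∀ u v w : V, c u w ≤ c u v + c v w)
    (xstar : Sym2 V → ℝ) (hfeas : LPFeasible s t xstar)
    (β ε : ℝ) (hβ0 : 0 ≤ β) (hβ : β < 1 / 2) (hε : 0 ≤ ε)
    (γ : Finset (Sym2 V) → ℝ) (hγ : ∀ S : Finset (Sym2 V), 0 ≤ γ S ∧ γ S ≤ 1)
    (p : Finset (Sym2 V) → ℝ) (hp0 : ∀ S : Finset (Sym2 V), 0 ≤ p S)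
    (hp1 : ∑ S : Finset (Sym2 V), p S = 1)
    (hpsupp : ∀ S : Finset (Sym2 V), p S ≠ 0 → IsSpanningTree S)
    (I : Finset (Sym2 V) → Finset (Sym2 V))
    (hI : ∀ S : Finset (Sym2 V), p S ≠ 0 → IsPathEdges s t S (I S))
    (eC : Finset (Sym2 V) → Sym2 V)
    (heC : ∀ C : Finset (Sym2 V), IsNarrowCut xstar C →
      eC C ∈ C ∧ ∀ f ∈ C, cost c (chi {eC C}) ≤ cost c (chi {f}))
    (x : Sym2 V → ℝ) (hx : ∀ e : Sym2 V, x e = ∑ S : Finset (Sym2 V), p S * chi S e)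
    (hben : ∀ C ∈ NarrowCuts xstar,
      β * (2 - xval xstar C - ε) / (1 - 2 * β) *
          (∑ S ∈ Finset.univ.filter (fun S : Finset (Sym2 V) => Even (S ∩ C).card), p S) ≤
        ∑ S : Finset (Sym2 V), p S * benefit xstar β ε (γ S) S C) :
    ∑ S : Finset (Sym2 V), p S * cost c (yvec xstar β ε (γ S) eC S (I S)) ≤
      (β + ε * β) * cost c xstar + (1 - 2 * β) * cost c x := by
  classical
  have hβ2 : (0:ℝ) < 1 - 2 * β := by linarith
  have hecnn : ∀ C : Finset (Sym2 V), 0 ≤ cost c (chi {eC C}) :=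
    fun C => cost_nonneg c hcnonneg _ (chi_nonneg _)
  -- expansion of the cost of yvec
  have hyexp : ∀ S : Finset (Sym2 V),
      cost c (yvec xstar β ε (γ S) eC S (I S))
        = β * (1 + ε) * cost c xstar + (1 - 2 * β) * cost c (chi (S \ I S))
          + ((1 - 2 * β) * γ S * cost c (chi (I S)) + (∑ C ∈ (NarrowCuts xstar).filter (fun C => Even (S ∩ C).card), max 0 (β * (2 - xval xstar C - ε) - (1 - 2 * β) * γ S) * cost c (chi {eC C}))) := by
    intro S
    exact cost_decomp c (β * (1 + ε)) (1 - 2 * β) ((1 - 2 * β) * γ S) xstar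
      (chi (S \ I S)) (chi (I S))
      ((NarrowCuts xstar).filter (fun C => Even (S ∩ C).card))
      (fun C => max 0 (β * (2 - xval xstar C - ε) - (1 - 2 * β) * γ S))
      (fun C => chi {eC C})
  -- benefit on even cuts
  have hbeq : ∀ (S C : Finset (Sym2 V)), Even (S ∩ C).card →
      benefit xstar β ε (γ S) S C = min (β * (2 - xval xstar C - ε) / (1 - 2 * β)) (γ S) := by
    intro S C hev
    unfold benefit
    rw [if_neg (fun h1 : (S ∩ C).card = 1 => by rw [h1] at hev; simp at hev), if_pos hev]
  -- benefit on non-even cuts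
  have hbnot : ∀ (S C : Finset (Sym2 V)),
      (if ¬Even (S ∩ C).card then p S * benefit xstar β ε (γ S) S C else 0)
        = (if (S ∩ C).card = 1 then p S * (1 - γ S) else 0) := by
    intro S C
    by_cases h1 : (S ∩ C).card = 1
    · have hodd : ¬Even (S ∩ C).card := by rw [h1]; simp
      rw [if_pos hodd, if_pos h1]
      unfold benefit
      rw [if_pos h1]
    · rw [if_neg h1]
      by_cases hev : Even (S ∩ C).card
      · rw [if_neg (not_not_intro hev)]
      · rw [if_pos hev]
        unfold benefit
        rw [if_neg h1, if_neg hev, mul_zero]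
  -- cost of x
  have hcx : cost c x = ∑ S : Finset (Sym2 V), p S * cost c (chi S) := by
    have hx' : x = fun e => ∑ S : Finset (Sym2 V), p S * chi S e := funext hx
    rw [hx']
    exact cost_csum c Finset.univ p chi
  -- the key inequality
  have hkey : (∑ S : Finset (Sym2 V), p S * (∑ C ∈ (NarrowCuts xstar).filter (fun C => Even (S ∩ C).card), max 0 (β * (2 - xval xstar C - ε) - (1 - 2 * β) * γ S) * cost c (chi {eC C})))
      ≤ (1 - 2 * β) * ∑ S : Finset (Sym2 V), p S * (1 - γ S) * cost c (chi (I S)) := by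
    have hstep1 : (∑ S : Finset (Sym2 V), p S * (∑ C ∈ (NarrowCuts xstar).filter (fun C => Even (S ∩ C).card), max 0 (β * (2 - xval xstar C - ε) - (1 - 2 * β) * γ S) * cost c (chi {eC C})))
        = ∑ S : Finset (Sym2 V), ∑ C ∈ NarrowCuts xstar,
            (if Even (S ∩ C).card then (p S * max 0 (β * (2 - xval xstar C - ε) - (1 - 2 * β) * γ S)) * cost c (chi {eC C}) else 0) := by
      refine Finset.sum_congr rfl fun S _ => ?_
      rw [Finset.mul_sum, Finset.sum_filter]
      refine Finset.sum_congr rfl fun C _ => ?_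
      split_ifs with h
      · ring
      · rfl
    have hperC : ∀ C ∈ NarrowCuts xstar,
        (∑ S : Finset (Sym2 V), if Even (S ∩ C).card then (p S * max 0 (β * (2 - xval xstar C - ε) - (1 - 2 * β) * γ S)) * cost c (chi {eC C}) else 0)
          ≤ ∑ S : Finset (Sym2 V),
              (if (S ∩ C).card = 1 then ((1 - 2 * β) * (p S * (1 - γ S))) * cost c (chi {eC C}) else 0) := by
      intro C hCN
      have hfac1 : (∑ S : Finset (Sym2 V), if Even (S ∩ C).card then (p S * max 0 (β * (2 - xval xstar C - ε) - (1 - 2 * β) * γ S)) * cost c (chi {eC C}) else 0)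
          = (∑ S : Finset (Sym2 V), if Even (S ∩ C).card then p S * max 0 (β * (2 - xval xstar C - ε) - (1 - 2 * β) * γ S) else 0) * cost c (chi {eC C}) := by
        rw [Finset.sum_mul]
        refine Finset.sum_congr rfl fun S _ => ?_
        split_ifs with h
        · rfl
        · rw [zero_mul]
      have hfac2 : (∑ S : Finset (Sym2 V),
            (if (S ∩ C).card = 1 then ((1 - 2 * β) * (p S * (1 - γ S))) * cost c (chi {eC C}) else 0))
          = (∑ S : Finset (Sym2 V), if (S ∩ C).card = 1 then (1 - 2 * β) * (p S * (1 - γ S)) else 0) * cost c (chi {eC C}) := by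
        rw [Finset.sum_mul]
        refine Finset.sum_congr rfl fun S _ => ?_
        split_ifs with h
        · rfl
        · rw [zero_mul]
      rw [hfac1, hfac2]
      refine mul_le_mul_of_nonneg_right ?_ (hecnn C)
      have e1 : (∑ S : Finset (Sym2 V), if Even (S ∩ C).card then p S * max 0 (β * (2 - xval xstar C - ε) - (1 - 2 * β) * γ S) else 0)
          = (∑ S : Finset (Sym2 V), if Even (S ∩ C).card then p S * (β * (2 - xval xstar C - ε)) else 0)
            - ∑ S : Finset (Sym2 V), (if Even (S ∩ C).card then (1 - 2 * β) * (p S * benefit xstar β ε (γ S) S C) else 0) := by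
        rw [← Finset.sum_sub_distrib]
        refine Finset.sum_congr rfl fun S _ => ?_
        split_ifs with h
        · rw [max_min_identity (β * (2 - xval xstar C - ε)) (γ S) (1 - 2 * β) hβ2, ← hbeq S C h]
          ring
        · norm_num
      have e2 : (∑ S : Finset (Sym2 V), if Even (S ∩ C).card then p S * (β * (2 - xval xstar C - ε)) else 0)
          = (∑ S ∈ Finset.univ.filter (fun S : Finset (Sym2 V) => Even (S ∩ C).card), p S) * (β * (2 - xval xstar C - ε)) := by
        rw [Finset.sum_mul, Finset.sum_filter]
      have e3 : (∑ S : Finset (Sym2 V), (if Even (S ∩ C).card then (1 - 2 * β) * (p S * benefit xstar β ε (γ S) S C) else 0))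
          = (1 - 2 * β) * ∑ S ∈ Finset.univ.filter (fun S : Finset (Sym2 V) => Even (S ∩ C).card),
              p S * benefit xstar β ε (γ S) S C := by
        rw [Finset.mul_sum, Finset.sum_filter]
      have e4 : (∑ S ∈ Finset.univ.filter (fun S : Finset (Sym2 V) => Even (S ∩ C).card), p S) * (β * (2 - xval xstar C - ε))
          ≤ (1 - 2 * β) * ∑ S : Finset (Sym2 V), p S * benefit xstar β ε (γ S) S C := by
        have h5 := mul_le_mul_of_nonneg_left (hben C hCN) hβ2.le
        have h6 : (1 - 2 * β) * (β * (2 - xval xstar C - ε) / (1 - 2 * β) * (∑ S ∈ Finset.univ.filter (fun S : Finset (Sym2 V) => Even (S ∩ C).card), p S))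
            = (∑ S ∈ Finset.univ.filter (fun S : Finset (Sym2 V) => Even (S ∩ C).card), p S) * (β * (2 - xval xstar C - ε)) := by
          field_simp
        rw [h6] at h5
        exact h5
      have e5 : (∑ S : Finset (Sym2 V), p S * benefit xstar β ε (γ S) S C)
          = (∑ S ∈ Finset.univ.filter (fun S : Finset (Sym2 V) => Even (S ∩ C).card), p S * benefit xstar β ε (γ S) S C)
            + ∑ S ∈ Finset.univ.filter (fun S : Finset (Sym2 V) => ¬Even (S ∩ C).card), p S * benefit xstar β ε (γ S) S C :=
        (Finset.sum_filter_add_sum_filter_not Finset.univ _ _).symm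
      have e6 : (∑ S ∈ Finset.univ.filter (fun S : Finset (Sym2 V) => ¬Even (S ∩ C).card), p S * benefit xstar β ε (γ S) S C)
          = ∑ S : Finset (Sym2 V), (if (S ∩ C).card = 1 then p S * (1 - γ S) else 0) := by
        rw [Finset.sum_filter]
        exact Finset.sum_congr rfl fun S _ => hbnot S C
      have e7 : (∑ S : Finset (Sym2 V), if (S ∩ C).card = 1 then (1 - 2 * β) * (p S * (1 - γ S)) else 0)
          = (1 - 2 * β) * ∑ S : Finset (Sym2 V), (if (S ∩ C).card = 1 then p S * (1 - γ S) else 0) := by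
        rw [Finset.mul_sum]
        refine Finset.sum_congr rfl fun S _ => ?_
        split_ifs with h
        · rfl
        · rw [mul_zero]
      rw [e1, e2, e7]
      rw [e3]
      have e8 : (1 - 2 * β) * (∑ S : Finset (Sym2 V), p S * benefit xstar β ε (γ S) S C)
          = (1 - 2 * β) * (∑ S ∈ Finset.univ.filter (fun S : Finset (Sym2 V) => Even (S ∩ C).card), p S * benefit xstar β ε (γ S) S C)
            + (1 - 2 * β) * ∑ S : Finset (Sym2 V), (if (S ∩ C).card = 1 then p S * (1 - γ S) else 0) := by
        rw [e5, e6]; ring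
      linarith [e4, e8]
    have hstep2 : (∑ C ∈ NarrowCuts xstar, ∑ S : Finset (Sym2 V),
          (if (S ∩ C).card = 1 then ((1 - 2 * β) * (p S * (1 - γ S))) * cost c (chi {eC C}) else 0))
        = (1 - 2 * β) * ∑ S : Finset (Sym2 V), p S * (1 - γ S) *
            (∑ C ∈ (NarrowCuts xstar).filter (fun C => (S ∩ C).card = 1), cost c (chi {eC C})) := by
      rw [Finset.sum_comm, Finset.mul_sum]
      refine Finset.sum_congr rfl fun S _ => ?_
      rw [← Finset.sum_filter]
      conv_rhs => rw [Finset.mul_sum, Finset.mul_sum]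
      refine Finset.sum_congr rfl fun C _ => ?_
      ring
    have hstep3 : ∀ S : Finset (Sym2 V),
        p S * (1 - γ S) * (∑ C ∈ (NarrowCuts xstar).filter (fun C => (S ∩ C).card = 1), cost c (chi {eC C}))
          ≤ p S * (1 - γ S) * cost c (chi (I S)) := by
      intro S
      by_cases hps : p S = 0
      · simp [hps]
      · exact mul_le_mul_of_nonneg_left
          (key_sum hst c hcnonneg hfeas (hpsupp S hps) (hI S hps) eC heC)
          (mul_nonneg (hp0 S) (by linarith [(hγ S).2]))
    calc (∑ S : Finset (Sym2 V), p S * (∑ C ∈ (NarrowCuts xstar).filter (fun C => Even (S ∩ C).card), max 0 (β * (2 - xval xstar C - ε) - (1 - 2 * β) * γ S) * cost c (chi {eC C})))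
        = ∑ S : Finset (Sym2 V), ∑ C ∈ NarrowCuts xstar,
            (if Even (S ∩ C).card then (p S * max 0 (β * (2 - xval xstar C - ε) - (1 - 2 * β) * γ S)) * cost c (chi {eC C}) else 0) := hstep1
      _ = ∑ C ∈ NarrowCuts xstar, ∑ S : Finset (Sym2 V),
            (if Even (S ∩ C).card then (p S * max 0 (β * (2 - xval xstar C - ε) - (1 - 2 * β) * γ S)) * cost c (chi {eC C}) else 0) := Finset.sum_comm
      _ ≤ ∑ C ∈ NarrowCuts xstar, ∑ S : Finset (Sym2 V),
            (if (S ∩ C).card = 1 then ((1 - 2 * β) * (p S * (1 - γ S))) * cost c (chi {eC C}) else 0) :=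
          Finset.sum_le_sum hperC
      _ = (1 - 2 * β) * ∑ S : Finset (Sym2 V), p S * (1 - γ S) *
            (∑ C ∈ (NarrowCuts xstar).filter (fun C => (S ∩ C).card = 1), cost c (chi {eC C})) := hstep2
      _ ≤ (1 - 2 * β) * ∑ S : Finset (Sym2 V), p S * (1 - γ S) * cost c (chi (I S)) := by
          refine mul_le_mul_of_nonneg_left ?_ hβ2.le
          exact Finset.sum_le_sum fun S _ => hstep3 S
  -- per-S bound
  have hterm : ∀ S : Finset (Sym2 V),
      p S * cost c (yvec xstar β ε (γ S) eC S (I S))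
        ≤ p S * (β * (1 + ε) * cost c xstar) + (1 - 2 * β) * (p S * cost c (chi S))
          - (1 - 2 * β) * (p S * (1 - γ S) * cost c (chi (I S))) + p S * (∑ C ∈ (NarrowCuts xstar).filter (fun C => Even (S ∩ C).card), max 0 (β * (2 - xval xstar C - ε) - (1 - 2 * β) * γ S) * cost c (chi {eC C})) := by
    intro S
    by_cases hps : p S = 0
    · simp [hps]
    · have hsub : I S ⊆ S := pathEdges_subset (hI S hps)
      have hsplit : cost c (chi S) = cost c (chi (S \ I S)) + cost c (chi (I S)) := by
        rw [show chi S = (fun e => chi (S \ I S) e + chi (I S) e) from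
          funext (chi_sdiff_add S (I S) hsub)]
        exact cost_add c (chi (S \ I S)) (chi (I S))
      rw [hyexp S, hsplit]
      apply le_of_eq
      ring
  -- assembly
  calc ∑ S : Finset (Sym2 V), p S * cost c (yvec xstar β ε (γ S) eC S (I S))
      ≤ ∑ S : Finset (Sym2 V),
          (p S * (β * (1 + ε) * cost c xstar) + (1 - 2 * β) * (p S * cost c (chi S))
            - (1 - 2 * β) * (p S * (1 - γ S) * cost c (chi (I S))) + p S * (∑ C ∈ (NarrowCuts xstar).filter (fun C => Even (S ∩ C).card), max 0 (β * (2 - xval xstar C - ε) - (1 - 2 * β) * γ S) * cost c (chi {eC C}))) :=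
        Finset.sum_le_sum fun S _ => hterm S
    _ = β * (1 + ε) * cost c xstar + (1 - 2 * β) * cost c x
        - (1 - 2 * β) * (∑ S : Finset (Sym2 V), p S * (1 - γ S) * cost c (chi (I S)))
        + ∑ S : Finset (Sym2 V), p S * (∑ C ∈ (NarrowCuts xstar).filter (fun C => Even (S ∩ C).card), max 0 (β * (2 - xval xstar C - ε) - (1 - 2 * β) * γ S) * cost c (chi {eC C})) := by
        rw [Finset.sum_add_distrib, Finset.sum_sub_distrib, Finset.sum_add_distrib,
          ← Finset.mul_sum, ← Finset.mul_sum, ← Finset.sum_mul, hp1, one_mul, hcx]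
    _ ≤ (β + ε * β) * cost c xstar + (1 - 2 * β) * cost c x := by
        have hr : β * (1 + ε) * cost c xstar = (β + ε * β) * cost c xstar := by ring
        linarith [hkey]

end STT

end
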